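/- arXiv:1908.06005 — 4 statements merged into one kernel-verified Lean document; each statement's English description precedes it below -/
import Mathlib

section
/- Let M denote the space of real symmetric trace-free 2×2 matrices. There exist a constant C > 0 and a family of smooth positive functions {γ_k ∈ C^∞(M;ℝ) : k ∈ Λ} such that for every R ∈ M: (i) γ_{−k}(R) = γ_k(R) for all k ∈ Λ; (ii) R = Σ_{k∈Λ} (γ_k(R))² (k ⊘ k); and (iii) γ_k(R) ≤ C (1 + |R|)^{1/2} for all k ∈ Λ, where |R| denotes a norm on M. -/
open MeasureTheory Real Filter Matrix
open scoped ENNReal NNReal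

noncomputable section

/-- Points of the torus `𝕋² = ℝ²/(2πℤ)²` are represented by points of `ℝ²`;
functions on `𝕋²` are `2π`-periodic functions on `ℝ²`. -/
abbrev Vec2 := Fin 2 → ℝ

/-- The `j`-th standard basis vector of `ℝ²`. -/
def e2 (j : Fin 2) : Vec2 := Pi.single j 1

/-- A fundamental domain for `𝕋²`. -/
def Q2 : Set Vec2 := Set.univ.pi fun _ => Set.Ioc (0:ℝ) (2*π)

/-- Lebesgue measure on `𝕋²`, realized on the fundamental domain. -/
def μT : Measure Vec2 := volume.restrict Q2

/-- `2π`-periodicity in each coordinate: a function on `𝕋²`. -/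
def Per {α : Type*} (f : Vec2 → α) : Prop :=
  ∀ (x : Vec2) (j : Fin 2), f (x + (2*π) • e2 j) = f x

/-- Divergence of a vector field. -/
def divg (f : Vec2 → Vec2) (x : Vec2) : ℝ := ∑ j, fderiv ℝ (fun y => f y j) x (e2 j)

/-- The set `Λ⁺` of direction vectors. -/
def Λp : Finset Vec2 :=
  { ![3/5, 4/5], ![3/5, -4/5], ![4/5, 3/5], ![4/5, -3/5] }

/-- The set `Λ⁻ = −Λ⁺`. -/
def Λm : Finset Vec2 := Λp.image (fun k => -k)

/-- The set of directions `Λ = Λ⁺ ∪ Λ⁻`. -/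
def Λdir : Finset Vec2 := Λp ∪ Λm

/-- `k⊥ = (−k₂, k₁)`. -/
def perp (k : Vec2) : Vec2 := ![-(k 1), k 0]

/-- Trace-free part of the tensor product of two real vectors:
`f ⊘ g = f ⊗ g − ½(f·g) I₂`. -/
def ot (f g : Vec2) : Fin 2 → Fin 2 → ℝ :=
  fun i j => f i * g j - (if i = j then (f ⬝ᵥ g) / 2 else 0)

/-- Trace-free part of the tensor product of two complex vectors. -/
def otC (f g : Fin 2 → ℂ) : Fin 2 → Fin 2 → ℂ :=
  fun i j => f i * g j - (if i = j then (f ⬝ᵥ g) / 2 else 0)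

/-! Write `R = [[x, y], [y, -x]]`. For `k ∈ Λ⁺` the tensor `k ⊘ k` has entries
`((k ⊘ k)₀₀, (k ⊘ k)₀₁) = (±7/50, ±12/25)`, each of the four sign patterns occurring once, and
`k ⊘ k` is even in `k`. So with `t = √(1 + x² + y²)` the choice
`γ_k² = 2t + (25/28) sgn((k ⊘ k)₀₀) x + (25/96) sgn((k ⊘ k)₀₁) y` reproduces `R`: the constant
part cancels because the four tensors sum to zero, and the two linear parts pick out `x` and `y`.
Since `t` dominates `1`, `|x|` and `|y|` and `25/28 + 25/96 < 2`, `γ_k²` is positive and smooth,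
and it grows linearly in `|R|`. -/

lemma apply_zero_pos_of_mem_Λp {k : Vec2} (hk : k ∈ Λp) : 0 < k 0 := by
  simp only [Λp, Finset.mem_insert, Finset.mem_singleton] at hk
  rcases hk with rfl | rfl | rfl | rfl <;> norm_num

lemma disjoint_Λp_Λm : Disjoint Λp Λm := by
  simp only [Λm, Finset.disjoint_left, Finset.mem_image]
  rintro _ hk ⟨k, hk', rfl⟩
  have := apply_zero_pos_of_mem_Λp hk
  have := apply_zero_pos_of_mem_Λp hk'
  simp only [Pi.neg_apply] at *
  linarith

lemma sum_Λdir_eq_sum_Λp {M : Type*} [AddCommMonoid M] (f : Vec2 → M) :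
    ∑ k ∈ Λdir, f k = ∑ k ∈ Λp, (f k + f (-k)) := by
  rw [Λdir, Finset.sum_union disjoint_Λp_Λm, Λm, Finset.sum_image neg_injective.injOn,
    Finset.sum_add_distrib]

lemma sum_Λp_eq {M : Type*} [AddCommMonoid M] (f : Vec2 → M) :
    ∑ k ∈ Λp, f k = f ![3/5, 4/5] + f ![3/5, -4/5] + f ![4/5, 3/5] + f ![4/5, -3/5] := by
  rw [Λp, Finset.sum_insert, Finset.sum_insert, Finset.sum_insert, Finset.sum_singleton,
    add_assoc, add_assoc]
  all_goals simp [funext_iff, Fin.forall_fin_two]; try norm_num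

lemma ot_neg_neg (f g : Vec2) : ot (-f) (-g) = ot f g := by
  ext i j
  simp [ot]

lemma Real.abs_sign_le_one (r : ℝ) : |Real.sign r| ≤ 1 := by
  rcases Real.sign_apply_eq r with h | h | h <;> simp [h]

lemma Real.abs_sign_mul_le (r x : ℝ) : |Real.sign r * x| ≤ |x| := by
  rw [abs_mul]
  exact mul_le_of_le_one_left (abs_nonneg x) (Real.abs_sign_le_one r)

lemma abs_le_sqrt_one_add_sq_add_sq (x y : ℝ) : |x| ≤ √(1 + x ^ 2 + y ^ 2) :=
  Real.abs_le_sqrt (by nlinarith [sq_nonneg y])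

lemma sqrt_one_add_sq_add_sq_le (x y : ℝ) : √(1 + x ^ 2 + y ^ 2) ≤ 1 + |x| + |y| :=
  (Real.sqrt_le_left (y := 1 + |x| + |y|) (by positivity)).2
    (by nlinarith [sq_abs x, sq_abs y, abs_nonneg x, abs_nonneg y])

lemma abs_apply_le_norm (R : Fin 2 → Fin 2 → ℝ) (i j : Fin 2) : |R i j| ≤ ‖R‖ :=
  (norm_le_pi_norm (R i) j).trans (norm_le_pi_norm R i)

def gammaSq (k : Vec2) (R : Fin 2 → Fin 2 → ℝ) : ℝ :=
  2 * √(1 + R 0 0 ^ 2 + R 0 1 ^ 2) + 25 / 28 * (Real.sign (ot k k 0 0) * R 0 0)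
    + 25 / 96 * (Real.sign (ot k k 0 1) * R 0 1)

lemma gammaSq_neg (k : Vec2) (R : Fin 2 → Fin 2 → ℝ) : gammaSq (-k) R = gammaSq k R := by
  rw [gammaSq, gammaSq, ot_neg_neg]

lemma gammaSq_pos (k : Vec2) (R : Fin 2 → Fin 2 → ℝ) : 0 < gammaSq k R := by
  have hx := abs_le_sqrt_one_add_sq_add_sq (R 0 0) (R 0 1)
  have hy := abs_le_sqrt_one_add_sq_add_sq (R 0 1) (R 0 0)
  rw [add_right_comm] at hy
  have h1 : 1 ≤ √(1 + R 0 0 ^ 2 + R 0 1 ^ 2) :=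
    Real.one_le_sqrt.2 (by nlinarith [sq_nonneg (R 0 0), sq_nonneg (R 0 1)])
  have := Real.abs_sign_mul_le (ot k k 0 0) (R 0 0)
  have := Real.abs_sign_mul_le (ot k k 0 1) (R 0 1)
  have := neg_abs_le (Real.sign (ot k k 0 0) * R 0 0)
  have := neg_abs_le (Real.sign (ot k k 0 1) * R 0 1)
  unfold gammaSq
  linarith

lemma gammaSq_le (k : Vec2) (R : Fin 2 → Fin 2 → ℝ) : gammaSq k R ≤ 6 * (1 + ‖R‖) := by
  have := sqrt_one_add_sq_add_sq_le (R 0 0) (R 0 1)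
  have := abs_apply_le_norm R 0 0
  have := abs_apply_le_norm R 0 1
  have := norm_nonneg R
  have := Real.abs_sign_mul_le (ot k k 0 0) (R 0 0)
  have := Real.abs_sign_mul_le (ot k k 0 1) (R 0 1)
  have := le_abs_self (Real.sign (ot k k 0 0) * R 0 0)
  have := le_abs_self (Real.sign (ot k k 0 1) * R 0 1)
  unfold gammaSq
  linarith

lemma contDiff_gammaSq (k : Vec2) : ContDiff ℝ (⊤ : ℕ∞) (gammaSq k) := by
  have h00 : ContDiff ℝ (⊤ : ℕ∞) fun R : Fin 2 → Fin 2 → ℝ => R 0 0 :=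
    (contDiff_apply ℝ ℝ 0).comp (contDiff_apply ℝ (Fin 2 → ℝ) 0)
  have h01 : ContDiff ℝ (⊤ : ℕ∞) fun R : Fin 2 → Fin 2 → ℝ => R 0 1 :=
    (contDiff_apply ℝ ℝ 1).comp (contDiff_apply ℝ (Fin 2 → ℝ) 0)
  have : ContDiff ℝ (⊤ : ℕ∞) fun R : Fin 2 → Fin 2 → ℝ => √(1 + R 0 0 ^ 2 + R 0 1 ^ 2) :=
    ContDiff.sqrt (by fun_prop) fun R => (by positivity : (0 : ℝ) < _).ne'
  unfold gammaSq
  fun_prop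

lemma sum_gammaSq_smul_ot (R : Fin 2 → Fin 2 → ℝ) (hsym : R 1 0 = R 0 1)
    (htr : R 1 1 = -R 0 0) : ∑ k ∈ Λdir, gammaSq k R • ot k k = R := by
  simp only [sum_Λdir_eq_sum_Λp, gammaSq_neg, ot_neg_neg, sum_Λp_eq]
  have h₁ : Real.sign (7 / 50) = 1 := Real.sign_of_pos (by norm_num)
  have h₂ : Real.sign (12 / 25) = 1 := Real.sign_of_pos (by norm_num)
  ext i j
  fin_cases i <;> fin_cases j <;>
    norm_num [gammaSq, ot, dotProduct, Fin.sum_univ_two, Real.sign_neg, h₁, h₂] <;> linarith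

/-- geometric lemma. There are a constant `C > 0` and smooth positive
functions `γ_k`, `k ∈ Λ`, on the space `M` of real symmetric trace-free `2×2` matrices,
with `γ_{−k} = γ_k`, `R = Σ_{k∈Λ} (γ_k(R))² (k ⊘ k)` and `γ_k(R) ≤ C(1+|R|)^{1/2}`. -/
theorem statement3 :
    ∃ C : ℝ, 0 < C ∧
    ∃ γ : Vec2 → (Fin 2 → Fin 2 → ℝ) → ℝ,
      (∀ k ∈ Λdir, ContDiff ℝ (⊤ : ℕ∞) (γ k)) ∧
      (∀ R : Fin 2 → Fin 2 → ℝ, (∀ i j, R i j = R j i) → R 0 0 + R 1 1 = 0 →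
        (∀ k ∈ Λdir, 0 < γ k R) ∧
        (∀ k ∈ Λdir, γ (-k) R = γ k R) ∧
        (R = ∑ k ∈ Λdir, (γ k R)^2 • ot k k) ∧
        (∀ k ∈ Λdir, γ k R ≤ C * Real.sqrt (1 + ‖R‖))) := by
  refine ⟨√6, by positivity, fun k R => √(gammaSq k R), fun k _ => ?_, fun R hsym htr => ?_⟩
  · exact (contDiff_gammaSq k).sqrt fun R => (gammaSq_pos k R).ne'
  refine ⟨fun k _ => Real.sqrt_pos.2 (gammaSq_pos k R),
    fun k _ => congrArg Real.sqrt (gammaSq_neg k R), ?_, fun k _ => ?_⟩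
  · simp only [Real.sq_sqrt (gammaSq_pos _ R).le]
    exact (sum_gammaSq_smul_ot R (hsym 1 0) (by linarith)).symm
  · rw [← Real.sqrt_mul (by norm_num)]
    exact Real.sqrt_le_sqrt (gammaSq_le k R)
end
end

section
/- Let Γ_* be the mollification of Γ by an even smooth nonnegative mollifier supported in (−1,1) with unit integral, where Γ(s) = s+1 for s > 0 and Γ(s) = 1 for s ≤ 0. Set k₁ = (3e₁+4e₂)/5, k₂ = (3e₁−4e₂)/5, k₃ = (4e₁+3e₂)/5, k₄ = (4e₁−3e₂)/5 and k_{−j} = −k_j for j = 1,2,3,4. Then for every real symmetric trace-free 2×2 matrix R with entries R₁₁, R₁₂ (so R₂₁ = R₁₂ and R₂₂ = −R₁₁): −R = (25/14·Γ_*(−R₁₁) + 25/48·Γ_*(R₁₂))·(k₁⊥ ⊘ k₁⊥ + k₋₁⊥ ⊘ k₋₁⊥) + (25/14·Γ_*(−R₁₁) + 25/48·Γ_*(−R₁₂))·(k₂⊥ ⊘ k₂⊥ + k₋₂⊥ ⊘ k₋₂⊥) + (25/14·Γ_*(R₁₁) + 25/48·Γ_*(R₁₂))·(k₃⊥ ⊘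 k₃⊥ + k₋₃⊥ ⊘ k₋₃⊥) + (25/14·Γ_*(R₁₁) + 25/48·Γ_*(−R₁₂))·(k₄⊥ ⊘ k₄⊥ + k₋₄⊥ ⊘ k₋₄⊥). -/
open MeasureTheory Real Filter Matrix
open scoped ENNReal NNReal

noncomputable section

/-- `Γ(s) = s+1` for `s > 0`, `Γ(s) = 1` for `s ≤ 0`. -/
def Γfun (s : ℝ) : ℝ := if 0 < s then s + 1 else 1

/-- Mollification `Γ_* = Γ * φ̃`. -/
def Γstar (φ : ℝ → ℝ) (s : ℝ) : ℝ := ∫ u : ℝ, Γfun (s - u) * φ u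

/- Since `Γ(t) - Γ(-t) = t` and `φ` is even with unit mass and vanishing first moment,
`Γ_*(s) - Γ_*(-s) = ∫ (s - u) φ(u) du = s`. Substituting `Γ_*(-R₁₁) = Γ_*(R₁₁) - R₁₁` and
`Γ_*(-R₁₂) = Γ_*(R₁₂) - R₁₂`, every `Γ_*` term cancels in the decomposition and what remains is
an identity between explicit `2×2` matrices. -/

lemma Γfun_sub_Γfun_neg (t : ℝ) : Γfun t - Γfun (-t) = t := by
  unfold Γfun
  rcases lt_trichotomy t 0 with h | rfl | h
  · rw [if_neg (by linarith), if_pos (by linarith)]; ring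
  · simp
  · rw [if_pos h, if_neg (by linarith)]; ring

lemma abs_Γfun_le (t : ℝ) : |Γfun t| ≤ 1 + |t| := by
  unfold Γfun
  split_ifs with h
  · rw [abs_of_pos (by linarith), abs_of_pos h, add_comm]
  · simp

lemma measurable_Γfun : Measurable Γfun :=
  Measurable.ite (measurableSet_lt measurable_const measurable_id)
    (measurable_id.add_const 1) measurable_const

lemma integral_mul_eq_zero_of_even {φ : ℝ → ℝ} (hφ_even : ∀ s, φ (-s) = φ s) :
    ∫ u, u * φ u = 0 := by
  have h : ∫ u, u * φ u = -∫ u, u * φ u := by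
    conv_lhs => rw [← integral_neg_eq_self]
    rw [← integral_neg]
    simp only [hφ_even, neg_mul]
  linarith

lemma Integrable.mul_of_abs_le_affine {g φ : ℝ → ℝ} (hg : AEStronglyMeasurable g)
    (hφ : Integrable φ) (huφ : Integrable fun u => u * φ u) {A B : ℝ}
    (hgb : ∀ u, |g u| ≤ A + B * |u|) : Integrable fun u => g u * φ u := by
  refine ((hφ.norm.const_mul A).add (huφ.norm.const_mul B)).mono'
    (hg.mul hφ.aestronglyMeasurable) (Eventually.of_forall fun u => ?_)
  simp only [Real.norm_eq_abs, abs_mul, Pi.add_apply]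
  nlinarith [mul_le_mul_of_nonneg_right (hgb u) (abs_nonneg (φ u))]

lemma integrable_Γfun_sub_mul {φ : ℝ → ℝ} (hφ : Integrable φ)
    (huφ : Integrable fun u => u * φ u) (c : ℝ) :
    Integrable fun u => Γfun (c - u) * φ u :=
  Integrable.mul_of_abs_le_affine
    (measurable_Γfun.comp (measurable_const.sub measurable_id)).aestronglyMeasurable hφ huφ
    (A := 1 + |c|) (B := 1) fun u => by
      linarith [abs_Γfun_le (c - u), abs_sub c u]

lemma Γstar_sub_Γstar_neg {φ : ℝ → ℝ} (hφ : Integrable φ)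
    (huφ : Integrable fun u => u * φ u) (hφ_even : ∀ s, φ (-s) = φ s)
    (hφ_int : ∫ u, φ u = 1) (s : ℝ) : Γstar φ s - Γstar φ (-s) = s := by
  have hflip : Γstar φ (-s) = ∫ u, Γfun (-(s - u)) * φ u := by
    rw [Γstar, ← integral_neg_eq_self]
    simp only [hφ_even, sub_neg_eq_add, neg_sub, neg_add_eq_sub]
  have hflip_int : Integrable fun u => Γfun (-(s - u)) * φ u := by
    have := (integrable_Γfun_sub_mul hφ huφ (-s)).comp_neg
    simpa only [hφ_even, sub_neg_eq_add, neg_sub, neg_add_eq_sub] using this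
  calc Γstar φ s - Γstar φ (-s)
      = ∫ u, (Γfun (s - u) - Γfun (-(s - u))) * φ u := by
        rw [hflip, Γstar, ← integral_sub (integrable_Γfun_sub_mul hφ huφ s) hflip_int]
        simp only [sub_mul]
    _ = ∫ u, (s * φ u - u * φ u) := by simp only [Γfun_sub_Γfun_neg, sub_mul]
    _ = s := by
        rw [integral_sub (hφ.const_mul s) huφ, integral_const_mul, hφ_int,
          integral_mul_eq_zero_of_even hφ_even]
        ring

lemma ot_perp_self (k : Vec2) :
    ot (perp k) (perp k) =
      ![![(k 1 ^ 2 - k 0 ^ 2) / 2, -(k 0 * k 1)], ![-(k 0 * k 1), (k 0 ^ 2 - k 1 ^ 2) / 2]] := by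
  ext i j
  fin_cases i <;> fin_cases j <;> simp [ot, perp, dotProduct] <;> ring

theorem statement4_general (φ : ℝ → ℝ)
    (hφ_smooth : ContDiff ℝ (⊤ : ℕ∞) φ)
    (hφ_even : ∀ s, φ (-s) = φ s)
    (hφ_supp : Function.support φ ⊆ Set.Ioo (-1) 1)
    (hφ_int : (∫ u : ℝ, φ u) = 1)
    (R11 R12 : ℝ) :
    (fun (k1 k2 k3 k4 : Vec2) (R : Fin 2 → Fin 2 → ℝ) =>
      -R =
        (25/14 * Γstar φ (-R11) + 25/48 * Γstar φ R12) •
          (ot (perp k1) (perp k1) + ot (perp (-k1)) (perp (-k1)))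
        + (25/14 * Γstar φ (-R11) + 25/48 * Γstar φ (-R12)) •
          (ot (perp k2) (perp k2) + ot (perp (-k2)) (perp (-k2)))
        + (25/14 * Γstar φ R11 + 25/48 * Γstar φ R12) •
          (ot (perp k3) (perp k3) + ot (perp (-k3)) (perp (-k3)))
        + (25/14 * Γstar φ R11 + 25/48 * Γstar φ (-R12)) •
          (ot (perp k4) (perp k4) + ot (perp (-k4)) (perp (-k4))))
      ![3/5, 4/5] ![3/5, -4/5] ![4/5, 3/5] ![4/5, -3/5]
      ![![R11, R12], ![R12, -R11]] := by
  have hcs : HasCompactSupport φ :=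
    .of_support_subset_isCompact isCompact_Icc (hφ_supp.trans Set.Ioo_subset_Icc_self)
  have hφ : Integrable φ := hφ_smooth.continuous.integrable_of_hasCompactSupport hcs
  have huφ : Integrable fun u => u * φ u :=
    (continuous_id.mul hφ_smooth.continuous).integrable_of_hasCompactSupport hcs.mul_left
  have h11 := Γstar_sub_Γstar_neg hφ huφ hφ_even hφ_int R11
  have h12 := Γstar_sub_Γstar_neg hφ huφ hφ_even hφ_int R12
  simp only [ot_perp_self, Pi.neg_apply]
  ext i j
  fin_cases i <;> fin_cases j <;> simp <;> linarith

/-- The explicit decomposition of `−R` for a symmetric trace-free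
`2×2` matrix `R`, in terms of the mollified cutoff `Γ_*` and the tensors
`k_j⊥ ⊘ k_j⊥ + k_{−j}⊥ ⊘ k_{−j}⊥`. -/
theorem statement4 (φ : ℝ → ℝ)
    (hφ_smooth : ContDiff ℝ (⊤ : ℕ∞) φ)
    (hφ_even : ∀ s, φ (-s) = φ s)
    (hφ_nonneg : ∀ s, 0 ≤ φ s)
    (hφ_supp : Function.support φ ⊆ Set.Ioo (-1) 1)
    (hφ_int : (∫ u : ℝ, φ u) = 1)
    (R11 R12 : ℝ) :
    (fun (k1 k2 k3 k4 : Vec2) (R : Fin 2 → Fin 2 → ℝ) =>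
      -R =
        (25/14 * Γstar φ (-R11) + 25/48 * Γstar φ R12) •
          (ot (perp k1) (perp k1) + ot (perp (-k1)) (perp (-k1)))
        + (25/14 * Γstar φ (-R11) + 25/48 * Γstar φ (-R12)) •
          (ot (perp k2) (perp k2) + ot (perp (-k2)) (perp (-k2)))
        + (25/14 * Γstar φ R11 + 25/48 * Γstar φ R12) •
          (ot (perp k3) (perp k3) + ot (perp (-k3)) (perp (-k3)))
        + (25/14 * Γstar φ R11 + 25/48 * Γstar φ (-R12)) •
          (ot (perp k4) (perp k4) + ot (perp (-k4)) (perp (-k4))))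
      ![3/5, 4/5] ![3/5, -4/5] ![4/5, 3/5] ![4/5, -3/5]
      ![![R11, R12], ![R12, -R11]] :=
  statement4_general φ hφ_smooth hφ_even hφ_supp hφ_int R11 R12
end
end

section
/- There exists an absolute constant C such that for every κ ∈ ℤ⁺ and all f, g ∈ C^∞(𝕋²) with g being (2π/κ)-periodic in each coordinate (i.e. g(x + (2π/κ)e_j) = g(x) for j = 1,2 and all x), one has ‖fg‖_{L²(𝕋²)} ≤ ‖f‖_{L²(𝕋²)} (⨍_{𝕋²} |g|² dx)^{1/2} + C κ^{−1/2} ‖f‖_{C¹(𝕋²)} ‖g‖_{L²(𝕋²)}. -/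
open MeasureTheory Real Filter Matrix
open scoped ENNReal NNReal

noncomputable section

/-!
Cut `𝕋²` into the `κ²` cells of side `h = 2π/κ`. By the periodicity of `g` every cell carries
the same mass `∫ g² = ‖g‖²/κ²`, while on a cell `f²` oscillates by at most `2 ‖f‖_∞ ‖∇f‖_∞ h`.
Comparing `f²` on each cell with its mean value there gives
`∫ f² g² ≤ (⨍ f² + 2 ‖f‖_∞ ‖∇f‖_∞ h) ∫ g²`, and `2 ‖f‖_∞ ‖∇f‖_∞ h ≤ 4 ‖f‖²_{C¹} / κ`,
so the claim holds with `C = 2` after taking square roots.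
-/

section GridCell

variable {ι : Type*}

def gridCell (h : ℝ) (m : ι → ℤ) : Set (ι → ℝ) :=
  Set.univ.pi fun j => Set.Ioc (m j * h) (m j * h + h)

lemma measurableSet_gridCell [Countable ι] (h : ℝ) (m : ι → ℤ) : MeasurableSet (gridCell h m) :=
  MeasurableSet.univ_pi fun _ => measurableSet_Ioc

lemma volume_gridCell [Fintype ι] (h : ℝ) (m : ι → ℤ) :
    volume (gridCell h m) = ENNReal.ofReal h ^ Fintype.card ι := by
  simp [gridCell, volume_pi_pi, Real.volume_Ioc]

lemma measureReal_gridCell [Fintype ι] {h : ℝ} (hh : 0 ≤ h) (m : ι → ℤ) :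
    volume.real (gridCell h m) = h ^ Fintype.card ι := by
  simp [measureReal_def, volume_gridCell, hh]

lemma pairwise_disjoint_gridCell (h : ℝ) :
    Pairwise (Function.onFun Disjoint (gridCell (ι := ι) h)) := by
  intro m m' hne
  obtain ⟨j, hj⟩ := Function.ne_iff.mp hne
  refine Set.disjoint_univ_pi.mpr ⟨j, ?_⟩
  simpa [add_smul, zsmul_eq_mul] using Set.pairwise_disjoint_Ioc_add_zsmul 0 h hj

lemma dist_le_of_mem_gridCell [Fintype ι] {h : ℝ} (hh : 0 ≤ h) {m : ι → ℤ} {x y : ι → ℝ}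
    (hx : x ∈ gridCell h m) (hy : y ∈ gridCell h m) : dist x y ≤ h := by
  refine (dist_pi_le_iff hh).mpr fun j => ?_
  have hxj := hx j (Set.mem_univ j)
  have hyj := hy j (Set.mem_univ j)
  rw [Real.dist_eq, abs_le]
  constructor <;> linarith [hxj.1, hxj.2, hyj.1, hyj.2]

lemma preimage_add_gridCell (h : ℝ) (m : ι → ℤ) :
    (· + h • fun j => (m j : ℝ)) ⁻¹' gridCell h m = gridCell h 0 := by
  ext x
  simp [gridCell, Set.mem_pi, mul_comm h, add_comm (x _)]

lemma Continuous.integrableOn_gridCell [Fintype ι] {E : Type*} [NormedAddCommGroup E]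
    {u : (ι → ℝ) → E} (hu : Continuous u) (h : ℝ) (m : ι → ℤ) : IntegrableOn u (gridCell h m) :=
  (hu.continuousOn.integrableOn_compact (isCompact_Icc (a := fun j => m j * h)
    (b := fun j => m j * h + h))).mono_set fun _ hx =>
      ⟨fun j => (hx j trivial).1.le, fun j => (hx j trivial).2⟩

lemma setIntegral_gridCell_eq_of_periodic [Fintype ι] {E : Type*} [NormedAddCommGroup E]
    [NormedSpace ℝ E] {h : ℝ} {m : ι → ℤ} {u : (ι → ℝ) → E}
    (hu : ∀ x, u (x + h • fun j => (m j : ℝ)) = u x) :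
    ∫ x in gridCell h m, u x = ∫ x in gridCell h 0, u x := by
  rw [← (measurePreserving_add_right volume _).setIntegral_preimage_emb
    (measurableEmbedding_addRight _), preimage_add_gridCell]
  simp only [hu]

lemma Ioc_zero_nat_mul_eq_iUnion {h : ℝ} (hh : 0 ≤ h) (n : ℕ) :
    Set.Ioc 0 (n * h) = ⋃ k : Fin n, Set.Ioc (k * h) (k * h + h) := by
  suffices Set.Ioc 0 (n * h) = ⋃ k < n, Set.Ioc (k * h) (k * h + h) by
    rw [this]; ext t; simp [Fin.exists_iff]
  induction n with
  | zero => simp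
  | succ n ih =>
    rw [Set.biUnion_lt_succ, ← ih, Nat.cast_succ, add_one_mul,
      Set.Ioc_union_Ioc_eq_Ioc (by positivity) (by linarith)]

lemma univ_pi_Ioc_eq_iUnion_gridCell {h : ℝ} (hh : 0 ≤ h) (n : ℕ) :
    Set.univ.pi (fun _ : ι => Set.Ioc 0 (n * h))
      = ⋃ m : ι → Fin n, gridCell h fun j => (m j : ℤ) := by
  simp only [gridCell, Ioc_zero_nat_mul_eq_iUnion hh, Int.cast_natCast]
  exact (Set.iUnion_univ_pi _).symm

end GridCell

theorem setIntegral_mul_le_of_le_add {α : Type*} [MeasurableSpace α] {μ : Measure α} {s : Set α}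
    (hs : MeasurableSet s) (hμs : μ s ≠ ∞) {F W : α → ℝ} {ε : ℝ} (hF : IntegrableOn F s μ)
    (hW : IntegrableOn W s μ) (hFW : IntegrableOn (fun x => F x * W x) s μ)
    (hW0 : ∀ x ∈ s, 0 ≤ W x) (hosc : ∀ x ∈ s, ∀ y ∈ s, F x ≤ F y + ε) :
    μ.real s * ∫ x in s, F x * W x ∂μ ≤ (∫ x in s, F x ∂μ + ε * μ.real s) * ∫ x in s, W x ∂μ := by
  have hconst : ∀ c : ℝ, IntegrableOn (fun _ => c) s μ := fun c => integrableOn_const hμs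
  have hy : ∀ y ∈ s, ∫ x in s, F x * W x ∂μ ≤ (F y + ε) * ∫ x in s, W x ∂μ := fun y hy => by
    rw [← integral_const_mul]
    exact setIntegral_mono_on hFW (hW.const_mul _) hs
      fun x hx => mul_le_mul_of_nonneg_right (hosc x hx y hy) (hW0 x hx)
  calc μ.real s * ∫ x in s, F x * W x ∂μ = ∫ _ in s, ∫ x in s, F x * W x ∂μ ∂μ :=
        (setIntegral_const _).symm
    _ ≤ ∫ y in s, (F y + ε) * ∫ x in s, W x ∂μ ∂μ :=
        setIntegral_mono_on (hconst _) ((hF.add (hconst ε)).mul_const _) hs hy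
    _ = (∫ x in s, F x ∂μ + ε * μ.real s) * ∫ x in s, W x ∂μ := by
        rw [integral_mul_const, integral_add hF (hconst ε), setIntegral_const, smul_eq_mul,
          mul_comm ε]

lemma map_add_smul_intCast_of_periodic {α : Type*} {u : Vec2 → α} {T : ℝ}
    (hu : ∀ x j, u (x + T • e2 j) = u x) (x : Vec2) (n : Fin 2 → ℤ) :
    u (x + T • fun j => (n j : ℝ)) = u x := by
  have hline : ∀ y j (k : ℤ), u (y + (k * T) • e2 j) = u y := fun y j k => by
    have hper : Function.Periodic (fun t : ℝ => u (y + t • e2 j)) T := fun t => by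
      simp only [add_smul, ← add_assoc, hu]
    simpa using hper.int_mul_eq k
  have hsplit : (T • fun j => (n j : ℝ)) = (n 0 * T) • e2 0 + (n 1 * T) • e2 1 := by
    ext i; fin_cases i <;> simp [e2, mul_comm]
  rw [hsplit, ← add_assoc, hline, hline]

lemma Per.comp {α β : Type*} {u : Vec2 → α} (hu : Per u) (φ : α → β) : Per (φ ∘ u) :=
  fun x j => congrArg φ (hu x j)

lemma Per.fderiv {F : Type*} [NormedAddCommGroup F] [NormedSpace ℝ F] {f : Vec2 → F}
    (hf : Per f) : Per (fderiv ℝ f) := fun x j => by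
  rw [← fderiv_comp_add_right, funext fun y => hf y j]

lemma Per.exists_mem_Icc_eq {α : Type*} {u : Vec2 → α} (hu : Per u) (x : Vec2) :
    ∃ y ∈ Set.Icc (0 : Vec2) (fun _ => 2 * π), u y = u x := by
  have h2π : (0 : ℝ) < 2 * π := by positivity
  refine ⟨fun j => toIcoMod h2π 0 (x j), ⟨fun j => ?_, fun j => ?_⟩, ?_⟩
  · exact (toIcoMod_mem_Ico h2π 0 (x j)).1
  · simpa using (toIcoMod_mem_Ico h2π 0 (x j)).2.le
  · conv_lhs => rw [← map_add_smul_intCast_of_periodic hu _ fun j => toIcoDiv h2π 0 (x j)]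
    congr 1
    ext j
    simp [toIcoMod, mul_comm]

lemma Per.bddAbove_range {u : Vec2 → ℝ} (hu : Per u) (hc : Continuous u) :
    BddAbove (Set.range u) := by
  refine ((isCompact_Icc (a := (0 : Vec2)) (b := fun _ => 2 * π)).bddAbove_image
    hc.continuousOn).mono ?_
  rintro _ ⟨x, rfl⟩
  exact hu.exists_mem_Icc_eq x

lemma Q2_eq_iUnion_gridCell {κ : ℕ} (hκ : 0 < κ) :
    Q2 = ⋃ m : Fin 2 → Fin κ, gridCell (2 * π / κ) fun j => (m j : ℤ) := by
  rw [← univ_pi_Ioc_eq_iUnion_gridCell (by positivity), mul_div_cancel₀ _ (by positivity)]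
  rfl

lemma integral_Q2_eq_sum_gridCell {κ : ℕ} (hκ : 0 < κ) {u : Vec2 → ℝ} (hu : Continuous u) :
    ∫ x in Q2, u x
      = ∑ m : Fin 2 → Fin κ, ∫ x in gridCell (2 * π / κ) (fun j => (m j : ℤ)), u x := by
  rw [Q2_eq_iUnion_gridCell hκ, integral_iUnion_fintype (fun m => measurableSet_gridCell _ _)
    (pairwise_disjoint_gridCell _ |>.comp_of_injective fun m m' hm => ?_)
    (fun m => hu.integrableOn_gridCell _ _)]
  ext j
  exact_mod_cast congrFun hm j

lemma sq_le_sq_add_of_dist_le {X : Type*} [PseudoMetricSpace X] {f : X → ℝ} {a : ℝ} {b : ℝ≥0}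
    (ha : ∀ x, |f x| ≤ a) (hf : LipschitzWith b f) {x y : X} {r : ℝ} (hxy : dist x y ≤ r) :
    f x ^ 2 ≤ f y ^ 2 + 2 * a * b * r := by
  have hfxy : |f x - f y| ≤ b * r := by
    rw [← Real.dist_eq]
    exact (hf.dist_le_mul x y).trans (mul_le_mul_of_nonneg_left hxy b.2)
  have hx := abs_le.mp (ha x)
  have hy := abs_le.mp (ha y)
  have hxy := abs_le.mp hfxy
  nlinarith [b.2]

theorem integral_Q2_sq_mul_sq_le {κ : ℕ} (hκ : 0 < κ) {f g : Vec2 → ℝ} {a : ℝ} {b : ℝ≥0}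
    (ha : ∀ x, |f x| ≤ a) (hf : LipschitzWith b f) (hg : Continuous g)
    (hg_per : ∀ x j, g (x + (2 * π / κ) • e2 j) = g x) :
    ∫ x in Q2, (f x * g x) ^ 2
      ≤ ((4 * π ^ 2)⁻¹ * (∫ x in Q2, f x ^ 2) + 2 * a * b * (2 * π / κ)) * ∫ x in Q2, g x ^ 2 := by
  have hf' : Continuous f := hf.continuous
  set h := 2 * π / κ
  have hh : 0 < h := by positivity
  set cell : (Fin 2 → Fin κ) → Set Vec2 := fun m => gridCell h fun j => (m j : ℤ)
  set G := ∫ x in gridCell h 0, g x ^ 2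
  have hG : ∀ m, ∫ x in cell m, g x ^ 2 = G := fun m =>
    setIntegral_gridCell_eq_of_periodic fun x => by
      rw [map_add_smul_intCast_of_periodic hg_per]
  have hcell : ∀ m, h ^ 2 * ∫ x in cell m, (f x * g x) ^ 2
      ≤ ((∫ x in cell m, f x ^ 2) + 2 * a * b * h * h ^ 2) * G := fun m => by
    have := setIntegral_mul_le_of_le_add (s := cell m) (measurableSet_gridCell _ _)
      ((volume_gridCell h _).trans_ne (by simp)) ((hf'.pow 2).integrableOn_gridCell _ _)
      ((hg.pow 2).integrableOn_gridCell _ _)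
      (((hf'.pow 2).mul (hg.pow 2)).integrableOn_gridCell _ _)
      (fun x _ => sq_nonneg (g x))
      fun x hx y hy => sq_le_sq_add_of_dist_le ha hf (dist_le_of_mem_gridCell hh.le hx hy)
    have hvol : volume.real (cell m) = h ^ 2 := (measureReal_gridCell hh.le _).trans (by simp)
    simpa only [Pi.pow_apply, hvol, hG m, mul_pow] using this
  have hIg : ∫ x in Q2, g x ^ 2 = κ ^ 2 * G := by
    rw [integral_Q2_eq_sum_gridCell hκ (by fun_prop), Finset.sum_congr rfl fun m _ => hG m]
    simp
  have hmain : h ^ 2 * ∫ x in Q2, (f x * g x) ^ 2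
      ≤ ((∫ x in Q2, f x ^ 2) + κ ^ 2 * (2 * a * b * h * h ^ 2)) * G :=
    calc h ^ 2 * ∫ x in Q2, (f x * g x) ^ 2 = ∑ m, h ^ 2 * ∫ x in cell m, (f x * g x) ^ 2 := by
          rw [integral_Q2_eq_sum_gridCell hκ (by fun_prop), Finset.mul_sum]
      _ ≤ ∑ m, ((∫ x in cell m, f x ^ 2) + 2 * a * b * h * h ^ 2) * G :=
          Finset.sum_le_sum fun m _ => hcell m
      _ = ((∫ x in Q2, f x ^ 2) + κ ^ 2 * (2 * a * b * h * h ^ 2)) * G := by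
          rw [← Finset.sum_mul, Finset.sum_add_distrib,
            ← integral_Q2_eq_sum_gridCell hκ (by fun_prop)]
          simp
  have hκh : (4 * π ^ 2)⁻¹ * (κ ^ 2 * h ^ 2) = 1 := by
    rw [← mul_pow, mul_div_cancel₀ _ (by positivity)]; field_simp; ring
  refine le_of_mul_le_mul_left (hmain.trans_eq ?_) (pow_pos hh 2)
  rw [hIg]
  linear_combination (-(∫ x in Q2, f x ^ 2) * G) * hκh

lemma Real.sqrt_le_sqrt_mul_sqrt_add_mul_sqrt {x a b c d : ℝ} (ha : 0 ≤ a) (hb : 0 ≤ b)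
    (hc : 0 ≤ c) (hd : 0 ≤ d) (hx : x ≤ a * b + c ^ 2 * d) :
    √x ≤ √a * √b + c * √d := by
  refine Real.sqrt_le_iff.mpr ⟨by positivity, hx.trans ?_⟩
  have hcross : 0 ≤ 2 * (√a * √b) * (c * √d) := by positivity
  nlinarith [Real.sq_sqrt ha, Real.sq_sqrt hb, Real.sq_sqrt hd]

/-- `L^p` product estimate. For `g` being `(2π/κ)`-periodic in each
coordinate, `‖fg‖_{L²} ≤ ‖f‖_{L²} (⨍|g|²)^{1/2} + C κ^{−1/2} ‖f‖_{C¹} ‖g‖_{L²}`. -/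
theorem statement13 :
    ∃ C : ℝ, 0 < C ∧
      ∀ κ : ℕ, 0 < κ → ∀ f g : Vec2 → ℝ,
        ContDiff ℝ (⊤ : ℕ∞) f → Per f →
        ContDiff ℝ (⊤ : ℕ∞) g →
        (∀ (x : Vec2) (j : Fin 2), g (x + (2*π/(κ:ℝ)) • e2 j) = g x) →
        Real.sqrt (∫ x in Q2, (f x * g x)^2)
          ≤ Real.sqrt (∫ x in Q2, (f x)^2)
              * Real.sqrt ((4*π^2 : ℝ)⁻¹ * ∫ x in Q2, (g x)^2)
            + C / Real.sqrt κ
              * ((⨆ x : Vec2, |f x|) + (⨆ x : Vec2, ‖fderiv ℝ f x‖))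
              * Real.sqrt (∫ x in Q2, (g x)^2) := by
  refine ⟨2, two_pos, fun κ hκ f g hf hf_per hg hg_per => ?_⟩
  set a := ⨆ x : Vec2, |f x|
  set b := ⨆ x : Vec2, ‖fderiv ℝ f x‖
  have ha : ∀ x, |f x| ≤ a := le_ciSup ((hf_per.comp abs).bddAbove_range (by fun_prop))
  have hb : ∀ x, ‖fderiv ℝ f x‖ ≤ b :=
    le_ciSup ((hf_per.fderiv.comp norm).bddAbove_range
      (hf.continuous_fderiv (by simp)).norm)
  have ha0 : 0 ≤ a := (abs_nonneg _).trans (ha 0)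
  have hb0 : 0 ≤ b := (norm_nonneg _).trans (hb 0)
  have hlip : LipschitzWith b.toNNReal f :=
    lipschitzWith_of_nnnorm_fderiv_le (hf.differentiable (by simp))
      fun x => by simpa only [norm_toNNReal] using Real.toNNReal_le_toNNReal (hb x)
  have hκ' : (0 : ℝ) < κ := by exact_mod_cast hκ
  have hab : 2 * a * b * (2 * π / κ) ≤ (2 / √κ * (a + b)) ^ 2 := by
    have : π * (a * b) ≤ (a + b) ^ 2 := by
      nlinarith [mul_le_mul_of_nonneg_right pi_le_four (mul_nonneg ha0 hb0), sq_nonneg (a - b)]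
    rw [mul_pow, div_pow, Real.sq_sqrt hκ'.le]
    calc 2 * a * b * (2 * π / κ) = 4 * (π * (a * b)) / κ := by ring
      _ ≤ 4 * (a + b) ^ 2 / κ := by gcongr
      _ = 2 ^ 2 / κ * (a + b) ^ 2 := by ring
  have hIg0 : 0 ≤ ∫ x in Q2, g x ^ 2 :=
    setIntegral_nonneg (MeasurableSet.univ_pi fun _ => measurableSet_Ioc) fun x _ => sq_nonneg _
  refine Real.sqrt_le_sqrt_mul_sqrt_add_mul_sqrt (by positivity) (by positivity) (by positivity)
    (by positivity) ((integral_Q2_sq_mul_sq_le hκ ha hlip hg.continuous hg_per).trans ?_)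
  calc _ = (∫ x in Q2, f x ^ 2) * ((4 * π ^ 2)⁻¹ * ∫ x in Q2, g x ^ 2)
        + 2 * a * b * (2 * π / κ) * ∫ x in Q2, g x ^ 2 := by rw [Real.coe_toNNReal b hb0]; ring
    _ ≤ _ := by gcongr
end
end

section
/- Let k, k' ∈ Λ and let λ be a positive integer multiple of 5. Then, as an identity of smooth vector fields on 𝕋², div( b_{k,λ} ⊘ b_{k',λ} + b_{k',λ} ⊘ b_{k,λ} ) = ∇( λ² ψ_{k,λ} ψ_{k',λ} ). -/
open MeasureTheory Real Filter Matrix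
open scoped ENNReal NNReal

noncomputable section

/-- The 2D stationary flow `b_{k,λ}(x) = i k⊥ e^{iλ k·x}`. -/
def bflow (k : Vec2) (l : ℝ) (x : Vec2) : Fin 2 → ℂ :=
  fun i => Complex.I * ((perp k i : ℝ) : ℂ) * Complex.exp (Complex.I * ((l * (k ⬝ᵥ x) : ℝ) : ℂ))

/-- Its potential `ψ_{k,λ}(x) = λ⁻¹ e^{iλ k·x}`. -/
def ψflow (k : Vec2) (l : ℝ) (x : Vec2) : ℂ :=
  ((l : ℂ))⁻¹ * Complex.exp (Complex.I * ((l * (k ⬝ᵥ x) : ℝ) : ℂ))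

/-- Partial derivative `∂_j` of a complex-valued function on `ℝ²`. -/
def pdC (j : Fin 2) (f : Vec2 → ℂ) : Vec2 → ℂ := fun x => fderiv ℝ f x (e2 j)


/-!
All the fields involved are multiples of the plane wave `E_k(y) = e^{iλ k·y}`, and
`E_k E_{k'} = E_{k+k'}`. Since `i² = -1`, the left-hand side is the divergence of
`-(k⊥ ⊘ k'⊥ + k'⊥ ⊘ k⊥) E_{k+k'}`, i.e. `-iλ E_{k+k'} (k⊥ ⊘ k'⊥ + k'⊥ ⊘ k⊥)(k + k')`, while the
right-hand side is `∇E_{k+k'} = iλ (k + k') E_{k+k'}`. In the plane,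
`(k⊥ ⊘ k'⊥ + k'⊥ ⊘ k⊥)(k + k') = -(|k'|² k + |k|² k')`, which is `-(k + k')` for unit vectors.
-/

section PlaneWave

variable {ι : Type*} [Fintype ι]

theorem hasFDerivAt_dotProduct (k x : ι → ℝ) :
    HasFDerivAt (k ⬝ᵥ ·) (∑ i, k i • ContinuousLinearMap.proj (R := ℝ) (φ := fun _ : ι => ℝ) i) x := by
  convert ContinuousLinearMap.hasFDerivAt _ using 1
  ext y
  simp [dotProduct]

def planeWave (k : ι → ℝ) (l : ℝ) (y : ι → ℝ) : ℂ :=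
  Complex.exp (Complex.I * ((l * (k ⬝ᵥ y) : ℝ) : ℂ))

theorem planeWave_mul_planeWave (k k' : ι → ℝ) (l : ℝ) (y : ι → ℝ) :
    planeWave k l y * planeWave k' l y = planeWave (k + k') l y := by
  simp only [planeWave, add_dotProduct, mul_add, Complex.ofReal_add, ← Complex.exp_add]

theorem hasFDerivAt_planeWave (k : ι → ℝ) (l : ℝ) (x : ι → ℝ) :
    HasFDerivAt (planeWave k l) (planeWave k l x • Complex.I •
      Complex.ofRealCLM.comp (l • ∑ i, k i • ContinuousLinearMap.proj i)) x :=
  ((Complex.ofRealCLM.hasFDerivAt.comp x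
    ((hasFDerivAt_dotProduct k x).const_mul l)).const_mul Complex.I).cexp

theorem fderiv_planeWave_apply (k : ι → ℝ) (l : ℝ) (x v : ι → ℝ) :
    fderiv ℝ (planeWave k l) x v = Complex.I * l * (k ⬝ᵥ v) * planeWave k l x := by
  rw [(hasFDerivAt_planeWave k l x).fderiv]
  simp [dotProduct]
  ring

end PlaneWave

theorem otC_mul_ofReal (a b : ℂ) (f g : Vec2) (i j : Fin 2) :
    otC (fun m => a * f m) (fun m => b * g m) i j = a * b * ot f g i j := by
  by_cases hij : i = j <;> simp [otC, ot, hij, dotProduct] <;> ring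

theorem bflow_eq (k : Vec2) (l : ℝ) (y : Vec2) :
    bflow k l y = fun m => Complex.I * planeWave k l y * perp k m := by
  funext m
  simp only [bflow, planeWave]
  ring

theorem otC_bflow_add_otC_bflow (k k' : Vec2) (l : ℝ) (y : Vec2) (i j : Fin 2) :
    otC (bflow k l y) (bflow k' l y) i j + otC (bflow k' l y) (bflow k l y) i j
      = -((ot (perp k) (perp k') i j + ot (perp k') (perp k) i j : ℝ) : ℂ)
          * planeWave (k + k') l y := by
  rw [bflow_eq, bflow_eq, otC_mul_ofReal, otC_mul_ofReal, ← planeWave_mul_planeWave]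
  push_cast
  linear_combination (planeWave k l y * planeWave k' l y
    * (ot (perp k) (perp k') i j + ot (perp k') (perp k) i j)) * Complex.I_sq

theorem sum_ot_perp_mul (k k' : Vec2) (i : Fin 2) :
    ∑ j, (ot (perp k) (perp k') i j + ot (perp k') (perp k) i j) * (k + k') j
      = -((k' ⬝ᵥ k') * k i + (k ⬝ᵥ k) * k' i) := by
  fin_cases i <;> simp [ot, perp, dotProduct, Fin.sum_univ_two] <;> ring

theorem dotProduct_self_of_mem_Λdir {k : Vec2} (hk : k ∈ Λdir) : k ⬝ᵥ k = 1 := by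
  simp only [Λdir, Λp, Λm, Finset.mem_union, Finset.mem_image, Finset.mem_insert,
    Finset.mem_singleton] at hk
  rcases hk with (rfl | rfl | rfl | rfl) | ⟨a, (rfl | rfl | rfl | rfl), rfl⟩ <;>
    norm_num [dotProduct, Fin.sum_univ_two]

/-- For `k, k' ∈ Λ` and `λ ∈ 5ℤ⁺`,
`div(b_{k,λ} ⊘ b_{k',λ} + b_{k',λ} ⊘ b_{k,λ}) = ∇(λ² ψ_{k,λ} ψ_{k',λ})`. -/
theorem statement18 (k : Vec2) (hk : k ∈ Λdir) (k' : Vec2) (hk' : k' ∈ Λdir)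
    (l : ℝ) (hl : ∃ n : ℕ, 0 < n ∧ l = 5 * n) :
    ∀ (x : Vec2) (i : Fin 2),
      (∑ j, fderiv ℝ
          (fun y => otC (bflow k l y) (bflow k' l y) i j
            + otC (bflow k' l y) (bflow k l y) i j) x (e2 j))
        = fderiv ℝ (fun y => ((l : ℂ))^2 * ψflow k l y * ψflow k' l y) x (e2 i) := by
  intro x i
  have hl0 : (l : ℂ) ≠ 0 := by
    obtain ⟨n, hn, rfl⟩ := hl
    norm_num
    positivity
  have hψ : (fun y => (l : ℂ) ^ 2 * ψflow k l y * ψflow k' l y) = planeWave (k + k') l := by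
    funext y
    rw [← planeWave_mul_planeWave]
    simp only [ψflow, planeWave]
    field_simp
  have hdiff : DifferentiableAt ℝ (planeWave (k + k') l) x :=
    (hasFDerivAt_planeWave _ _ _).differentiableAt
  have hsum : ∑ j, ((ot (perp k) (perp k') i j : ℂ) + ot (perp k') (perp k) i j)
      * ((k + k') j : ℂ) = -((k + k') i : ℂ) := by
    have h := sum_ot_perp_mul k k' i
    rw [dotProduct_self_of_mem_Λdir hk, dotProduct_self_of_mem_Λdir hk', one_mul, one_mul,
      ← Pi.add_apply] at h
    exact_mod_cast h
  simp_rw [otC_bflow_add_otC_bflow, hψ, fderiv_const_mul hdiff, _root_.smul_apply,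
    fderiv_planeWave_apply, e2, dotProduct_single_one, smul_eq_mul]
  calc _ = -(Complex.I * l * planeWave (k + k') l x) * ∑ j,
        ((ot (perp k) (perp k') i j : ℂ) + ot (perp k') (perp k) i j) * ((k + k') j : ℂ) := by
        rw [Finset.mul_sum]
        refine Finset.sum_congr rfl fun j _ => ?_
        push_cast
        ring
    _ = _ := by
        rw [hsum]
        ring
end
end
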